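/- Under the assumptions max_i ‖x_i‖^2 ≤ 1 and n ≥ 3, with |T| = n·binom(n−1,2), one has (1/|T|)·‖Σ_{t∈T} M_t^2‖ ≤ 70·‖X X^T‖/n, where M_t = X L_t X^T. -/

import Mathlib

open Matrix
open scoped Matrix.Norms.L2Operator

/-- `L_t = e_i e_kᵀ + e_k e_iᵀ − e_i e_jᵀ − e_j e_iᵀ + e_j e_jᵀ − e_k e_kᵀ`. -/
def Lt {n : ℕ} (i j k : Fin n) : Matrix (Fin n) (Fin n) ℝ :=
  vecMulVec (Pi.single i 1) (Pi.single k 1) + vecMulVec (Pi.single k 1) (Pi.single i 1)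
    - vecMulVec (Pi.single i 1) (Pi.single j 1) - vecMulVec (Pi.single j 1) (Pi.single i 1)
    + vecMulVec (Pi.single j 1) (Pi.single j 1) - vecMulVec (Pi.single k 1) (Pi.single k 1)

/-- `M_t = X L_t Xᵀ`. -/
def Mt {p n : ℕ} (X : Matrix (Fin p) (Fin n) ℝ) (i j k : Fin n) : Matrix (Fin p) (Fin p) ℝ :=
  X * Lt i j k * Xᵀ

/-!
Since `M_t² = X (L_t A L_t) Xᵀ` with `A = XᵀX`, the sum is `X S Xᵀ` with
`S = Σ_t L_t A L_t`, and `‖X S Xᵀ‖ ≤ ‖S‖ ‖X Xᵀ‖`. By Cauchy–Schwarz `|A_cd| ≤ 1`.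
As `L_t v = (v_k - v_j) e_i + (v_j - v_i) e_j + (v_i - v_k) e_k`, the row `a` of `L_t A L_t`
vanishes unless `a ∈ {i, j, k}`; otherwise it is `L_t u` for a vector `u` with entries in
`[-2, 2]`, so its `ℓ¹` norm is at most `8`. Each index lies in at most `3 (n-1)(n-2)` triples,
so every row and column of the symmetric matrix `S` has `ℓ¹` norm at most `24 (n-1)(n-2)`, and
the Schur test gives `‖S‖ ≤ 24 (n-1)(n-2)`. Dividing by `|T| = n (n-1)(n-2) / 2` yields the
bound with `48` in place of `70`.
-/

/-- The Schur test. -/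
theorem Matrix.l2_opNorm_le_sqrt_of_sum_abs_le {m n : Type*} [Fintype m] [Fintype n]
    [DecidableEq n] (B : Matrix m n ℝ) {R C : ℝ} (hR : 0 ≤ R)
    (hrow : ∀ i, ∑ j, |B i j| ≤ R) (hcol : ∀ j, ∑ i, |B i j| ≤ C) :
    ‖B‖ ≤ √(R * C) := by
  rw [l2_opNorm_def]
  refine ContinuousLinearMap.opNorm_le_bound _ (Real.sqrt_nonneg _) fun x => ?_
  rw [← Real.sqrt_sq (norm_nonneg x), ← Real.sqrt_mul' _ (sq_nonneg _), ← abs_norm]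
  refine Real.abs_le_sqrt ?_
  have hrow_sq : ∀ i, (∑ j, B i j * x j) ^ 2 ≤ R * ∑ j, |B i j| * x j ^ 2 := fun i =>
    calc (∑ j, B i j * x j) ^ 2 ≤ (∑ j, |B i j|) * ∑ j, |B i j| * x j ^ 2 :=
          Finset.sum_sq_le_sum_mul_sum_of_sq_le_mul _ (fun _ _ => abs_nonneg _)
            (fun _ _ => by positivity) fun j _ => le_of_eq <| by
              rw [mul_pow, ← sq_abs (B i j)]; ring
      _ ≤ R * ∑ j, |B i j| * x j ^ 2 := by gcongr; exact hrow i
  calc ‖(toEuclideanLin.trans LinearMap.toContinuousLinearMap) B x‖ ^ 2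
      = ∑ i, (∑ j, B i j * x j) ^ 2 := by
        simp [EuclideanSpace.norm_sq_eq, mulVec, dotProduct]
    _ ≤ ∑ i, R * ∑ j, |B i j| * x j ^ 2 := Finset.sum_le_sum fun i _ => hrow_sq i
    _ = R * ∑ j, (∑ i, |B i j|) * x j ^ 2 := by
        rw [← Finset.mul_sum, Finset.sum_comm]; simp_rw [Finset.sum_mul]
    _ ≤ R * ∑ j, C * x j ^ 2 := by gcongr with j; exact hcol j
    _ = R * C * ‖x‖ ^ 2 := by
        simp only [EuclideanSpace.norm_sq_eq, Real.norm_eq_abs, sq_abs, Finset.mul_sum, mul_assoc]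

theorem Matrix.l2_opNorm_mul_mul_conjTranspose_le {𝕜 m n : Type*} [RCLike 𝕜] [Fintype m]
    [Fintype n] [DecidableEq m] [DecidableEq n] (X : Matrix m n 𝕜) (S : Matrix n n 𝕜) :
    ‖X * S * Xᴴ‖ ≤ ‖S‖ * ‖X * Xᴴ‖ := by
  have hXXH : ‖X * Xᴴ‖ = ‖X‖ * ‖X‖ := by
    rw [← l2_opNorm_conjTranspose X, ← l2_opNorm_conjTranspose_mul_self,
      conjTranspose_conjTranspose]
  calc ‖X * S * Xᴴ‖ ≤ ‖X‖ * ‖S‖ * ‖Xᴴ‖ :=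
        (l2_opNorm_mul _ _).trans (by gcongr; exact l2_opNorm_mul _ _)
    _ = ‖S‖ * ‖X * Xᴴ‖ := by rw [l2_opNorm_conjTranspose, hXXH]; ring

theorem abs_transpose_mul_self_apply_le_one {m n : Type*} [Fintype m] (X : Matrix m n ℝ)
    (hX : ∀ i, ∑ a, X a i ^ 2 ≤ 1) (c d : n) : |(Xᵀ * X) c d| ≤ 1 := by
  rw [← sq_le_one_iff_abs_le_one, mul_apply]
  simp only [transpose_apply]
  exact (Finset.sum_mul_sq_le_sq_mul_sq _ _ _).trans
    (mul_le_one₀ (hX c) (Finset.sum_nonneg fun _ _ => sq_nonneg _) (hX d))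

theorem sum_abs_single {ι : Type*} [Fintype ι] [DecidableEq ι] (c : ι) (x : ℝ) :
    ∑ b, |(Pi.single c x : ι → ℝ) b| = |x| := by
  rw [Fintype.sum_eq_single c fun b hb => by simp [hb]]
  simp

theorem abs_sub_add_abs_sub_add_abs_sub_le {x y z lo hi : ℝ} (hx : x ∈ Set.Icc lo hi)
    (hy : y ∈ Set.Icc lo hi) (hz : z ∈ Set.Icc lo hi) :
    |z - y| + |y - x| + |x - z| ≤ 2 * (hi - lo) := by
  obtain ⟨hx1, hx2⟩ := hx
  obtain ⟨hy1, hy2⟩ := hy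
  obtain ⟨hz1, hz2⟩ := hz
  rcases abs_cases (z - y) with h1 | h1 <;> rcases abs_cases (y - x) with h2 | h2 <;>
    rcases abs_cases (x - z) with h3 | h3 <;> linarith

section Lt

variable {n : ℕ} (i j k : Fin n)

theorem Lt_transpose : (Lt i j k)ᵀ = Lt i j k := by
  simp only [Lt, transpose_add, transpose_sub, transpose_vecMulVec]
  abel

theorem Lt_mulVec (v : Fin n → ℝ) :
    Lt i j k *ᵥ v
      = Pi.single i (v k - v j) + Pi.single j (v j - v i) + Pi.single k (v i - v k) := by
  ext c
  simp only [Lt, add_mulVec, sub_mulVec, vecMulVec_mulVec, single_one_dotProduct, Pi.add_apply,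
    Pi.sub_apply, Pi.smul_apply, MulOpposite.smul_eq_mul_unop, MulOpposite.unop_op,
    Pi.single_apply]
  split_ifs <;> ring

theorem sum_abs_Lt_mulVec_le (v : Fin n → ℝ) :
    ∑ b, |(Lt i j k *ᵥ v) b| ≤ |v k - v j| + |v j - v i| + |v i - v k| := by
  rw [Lt_mulVec]
  calc ∑ b, |(Pi.single i (v k - v j) + Pi.single j (v j - v i)
          + Pi.single k (v i - v k) : Fin n → ℝ) b|
      ≤ ∑ b, (|Pi.single i (v k - v j) b| + |Pi.single j (v j - v i) b|
          + |Pi.single k (v i - v k) b|) :=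
        Finset.sum_le_sum fun b _ => (abs_add_le _ _).trans (by gcongr; exact abs_add_le _ _)
    _ = _ := by simp only [Finset.sum_add_distrib, sum_abs_single]

theorem Lt_apply_eq_mulVec_single (a : Fin n) : Lt i j k a = Lt i j k *ᵥ Pi.single a 1 := by
  ext c
  rw [mulVec_single_one, ← transpose_apply (Lt i j k), Lt_transpose]
  rfl

theorem Lt_mul_mul_Lt_apply (A : Matrix (Fin n) (Fin n) ℝ) (a : Fin n) :
    (Lt i j k * A * Lt i j k) a = Lt i j k *ᵥ (Lt i j k a ᵥ* A) := by
  ext b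
  rw [← vecMul_transpose, Lt_transpose]
  simp [mul_apply, vecMul, dotProduct]

theorem sum_abs_Lt_mul_mul_Lt_apply_le (A : Matrix (Fin n) (Fin n) ℝ)
    (hA : ∀ c d, |A c d| ≤ 1) (a : Fin n) :
    ∑ b, |(Lt i j k * A * Lt i j k) a b| ≤ if a = i ∨ a = j ∨ a = k then 8 else 0 := by
  set w := Lt i j k a
  set r := ∑ d, |w d|
  have hr : r ≤ if a = i ∨ a = j ∨ a = k then 2 else 0 := by
    refine (Lt_apply_eq_mulVec_single i j k a ▸ sum_abs_Lt_mulVec_le i j k _).trans ?_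
    split_ifs with ha
    · have h01 : ∀ c, (Pi.single a 1 : Fin n → ℝ) c ∈ Set.Icc 0 1 := fun c => by
        by_cases hc : c = a <;> simp [hc]
      simpa using abs_sub_add_abs_sub_add_abs_sub_le (h01 i) (h01 j) (h01 k)
    · push Not at ha
      simp [ha.1.symm, ha.2.1.symm, ha.2.2.symm]
  set u := w ᵥ* A
  have hu : ∀ c, u c ∈ Set.Icc (-r) r := fun c => by
    rw [Set.mem_Icc, ← abs_le]
    calc |∑ d, w d * A d c| ≤ ∑ d, |w d| * |A d c| := by
          simpa only [abs_mul] using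
            Finset.abs_sum_le_sum_abs (fun d => w d * A d c) Finset.univ
      _ ≤ r := Finset.sum_le_sum fun d _ => mul_le_of_le_one_right (abs_nonneg _) (hA d c)
  calc ∑ b, |(Lt i j k * A * Lt i j k) a b|
      ≤ |u k - u j| + |u j - u i| + |u i - u k| := by
        rw [Lt_mul_mul_Lt_apply]; exact sum_abs_Lt_mulVec_le i j k _
    _ ≤ 2 * (r - -r) := abs_sub_add_abs_sub_add_abs_sub_le (hu i) (hu j) (hu k)
    _ ≤ _ := by split_ifs at hr ⊢ <;> linarith

end Lt

section Triples

open Finset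

variable {n : ℕ} (s : Finset (Fin n × Fin n × Fin n))

theorem sum_abs_sum_Lt_mul_mul_Lt_apply_le (A : Matrix (Fin n) (Fin n) ℝ)
    (hA : ∀ c d, |A c d| ≤ 1) (a : Fin n) :
    ∑ b, |(∑ t ∈ s, Lt t.1 t.2.1 t.2.2 * A * Lt t.1 t.2.1 t.2.2) a b|
      ≤ 8 * #{t ∈ s | a = t.1 ∨ a = t.2.1 ∨ a = t.2.2} := by
  calc ∑ b, |(∑ t ∈ s, Lt t.1 t.2.1 t.2.2 * A * Lt t.1 t.2.1 t.2.2) a b|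
      ≤ ∑ b, ∑ t ∈ s, |(Lt t.1 t.2.1 t.2.2 * A * Lt t.1 t.2.1 t.2.2) a b| := by
        gcongr with b; rw [Matrix.sum_apply]; exact abs_sum_le_sum_abs _ _
    _ ≤ ∑ t ∈ s, if a = t.1 ∨ a = t.2.1 ∨ a = t.2.2 then (8 : ℝ) else 0 := by
        rw [sum_comm]; gcongr with t; exact sum_abs_Lt_mul_mul_Lt_apply_le _ _ _ A hA a
    _ = _ := by rw [sum_ite, sum_const_zero, sum_const, nsmul_eq_mul, add_zero, mul_comm]

theorem card_filter_triple_containing_le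
    (hs : ∀ t ∈ s, t.1 ≠ t.2.1 ∧ t.1 ≠ t.2.2 ∧ t.2.1 ≠ t.2.2) (a : Fin n) :
    #{t ∈ s | a = t.1 ∨ a = t.2.1 ∨ a = t.2.2} ≤ 3 * ((n - 1) * (n - 2)) := by
  set P := (univ.erase a).offDiag
  have hP : #P = (n - 1) * (n - 2) := by
    rw [offDiag_card, card_erase_of_mem (mem_univ a), card_univ, Fintype.card_fin,
      ← Nat.mul_sub_one, Nat.sub_sub]
  have hsub : {t ∈ s | a = t.1 ∨ a = t.2.1 ∨ a = t.2.2} ⊆ P.image (fun q => (a, q.1, q.2))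
      ∪ P.image (fun q => (q.1, a, q.2)) ∪ P.image (fun q => (q.1, q.2, a)) := by
    rintro ⟨i, j, k⟩ ht
    obtain ⟨hmem, ha⟩ := mem_filter.1 ht
    obtain ⟨hij, hik, hjk⟩ := hs _ hmem
    rcases ha with rfl | rfl | rfl <;> simp [P, hij, hik, hjk, hij.symm, hik.symm, hjk.symm]
  calc #{t ∈ s | a = t.1 ∨ a = t.2.1 ∨ a = t.2.2}
      ≤ #P + #P + #P := (card_le_card hsub).trans <| (card_union_le _ _).trans <|
        add_le_add ((card_union_le _ _).trans (add_le_add card_image_le card_image_le))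
          card_image_le
    _ = 3 * ((n - 1) * (n - 2)) := by rw [hP]; ring

theorem norm_sum_Lt_mul_mul_Lt_le
    (hs : ∀ t ∈ s, t.1 ≠ t.2.1 ∧ t.1 ≠ t.2.2 ∧ t.2.1 ≠ t.2.2)
    (A : Matrix (Fin n) (Fin n) ℝ) (hA : ∀ c d, |A c d| ≤ 1) :
    ‖∑ t ∈ s, Lt t.1 t.2.1 t.2.2 * A * Lt t.1 t.2.1 t.2.2‖
      ≤ 24 * ((n - 1) * (n - 2) : ℕ) := by
  set R : ℝ := 24 * ((n - 1) * (n - 2) : ℕ)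
  have hrow : ∀ B : Matrix (Fin n) (Fin n) ℝ, (∀ c d, |B c d| ≤ 1) → ∀ a,
      ∑ b, |(∑ t ∈ s, Lt t.1 t.2.1 t.2.2 * B * Lt t.1 t.2.1 t.2.2) a b| ≤ R := fun B hB a =>
    calc _ ≤ 8 * (#{t ∈ s | a = t.1 ∨ a = t.2.1 ∨ a = t.2.2} : ℝ) :=
          sum_abs_sum_Lt_mul_mul_Lt_apply_le s B hB a
      _ ≤ 8 * ((3 * ((n - 1) * (n - 2)) : ℕ) : ℝ) := by
          gcongr; exact_mod_cast card_filter_triple_containing_le s hs a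
      _ = R := by simp only [R, Nat.cast_mul, Nat.cast_ofNat]; ring
  have htranspose : (∑ t ∈ s, Lt t.1 t.2.1 t.2.2 * A * Lt t.1 t.2.1 t.2.2)ᵀ
      = ∑ t ∈ s, Lt t.1 t.2.1 t.2.2 * Aᵀ * Lt t.1 t.2.1 t.2.2 := by
    simp only [transpose_sum, transpose_mul, Lt_transpose, Matrix.mul_assoc]
  have hR : 0 ≤ R := by positivity
  rw [← Real.sqrt_mul_self hR]
  refine l2_opNorm_le_sqrt_of_sum_abs_le _ hR (hrow A hA) fun b => ?_
  simpa only [← transpose_apply _ b, htranspose] using hrow Aᵀ (fun c d => hA d c) b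

end Triples

theorem Mt_mul_self {p n : ℕ} (X : Matrix (Fin p) (Fin n) ℝ) (i j k : Fin n) :
    Mt X i j k * Mt X i j k = X * (Lt i j k * (Xᵀ * X) * Lt i j k) * Xᵀ := by
  simp only [Mt, Matrix.mul_assoc]

/-- With `max_i ‖x_i‖² ≤ 1` and `n ≥ 3`, and `|T| = n·C(n−1,2)`,
`(1/|T|)·‖Σ_{t∈T} M_t²‖ ≤ 70·‖X Xᵀ‖/n` in the spectral norm. -/
theorem avg_sum_Mt_sq_norm_le {p n : ℕ} (hn : 3 ≤ n) (X : Matrix (Fin p) (Fin n) ℝ)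
    (hnorm : ∀ i, (∑ a, (X a i) ^ 2) ≤ 1) :
    (1 / (n * (n - 1).choose 2 : ℝ)) *
      ‖∑ t ∈ Finset.univ.filter
          (fun t : Fin n × Fin n × Fin n => t.1 ≠ t.2.1 ∧ t.1 ≠ t.2.2 ∧ t.2.1 < t.2.2),
        Mt X t.1 t.2.1 t.2.2 * Mt X t.1 t.2.1 t.2.2‖
      ≤ 70 * ‖X * Xᵀ‖ / n := by
  set T := Finset.univ.filter
    (fun t : Fin n × Fin n × Fin n => t.1 ≠ t.2.1 ∧ t.1 ≠ t.2.2 ∧ t.2.1 < t.2.2)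
  set S := ∑ t ∈ T, Lt t.1 t.2.1 t.2.2 * (Xᵀ * X) * Lt t.1 t.2.1 t.2.2
  have hT : ∀ t ∈ T, t.1 ≠ t.2.1 ∧ t.1 ≠ t.2.2 ∧ t.2.1 ≠ t.2.2 := fun t ht => by
    obtain ⟨h1, h2, h3⟩ := (Finset.mem_filter.1 ht).2
    exact ⟨h1, h2, h3.ne⟩
  have hsum : ∑ t ∈ T, Mt X t.1 t.2.1 t.2.2 * Mt X t.1 t.2.1 t.2.2 = X * S * Xᵀ := by
    simp only [S, Mt_mul_self, Matrix.mul_sum, Matrix.sum_mul]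
  have hS := norm_sum_Lt_mul_mul_Lt_le T hT _ (abs_transpose_mul_self_apply_le_one X hnorm)
  have hXSX : ‖X * S * Xᵀ‖ ≤ ‖S‖ * ‖X * Xᵀ‖ := by
    simpa only [conjTranspose_eq_transpose_of_trivial] using
      l2_opNorm_mul_mul_conjTranspose_le X S
  have hn3 : (3 : ℝ) ≤ n := by exact_mod_cast hn
  have hn1 : (0 : ℝ) < n - 1 := by linarith
  have hn2 : (0 : ℝ) < n - 2 := by linarith
  have hcast : (((n - 1) * (n - 2) : ℕ) : ℝ) = (n - 1) * (n - 2) := by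
    push_cast [Nat.cast_sub (by omega : 1 ≤ n), Nat.cast_sub (by omega : 2 ≤ n)]; ring
  have hcard : (n * (n - 1).choose 2 : ℝ) = n * ((n - 1) * (n - 2)) / 2 := by
    rw [Nat.cast_choose_two, Nat.cast_sub (by omega : 1 ≤ n)]; push_cast; ring
  rw [hcast] at hS
  rw [hsum, hcard]
  calc _ ≤ 1 / (n * ((n - 1) * (n - 2)) / 2) * (24 * ((n - 1) * (n - 2)) * ‖X * Xᵀ‖) := by
        gcongr; exact hXSX.trans (by gcongr)
    _ = 48 * ‖X * Xᵀ‖ / n := by field_simp; ring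
    _ ≤ 70 * ‖X * Xᵀ‖ / n := by gcongr; norm_num
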